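/- Let n ≥ 1 and let S be a skew-symmetric n×n complex matrix. Consider the polynomial ring ℂ[x_{ab}, y_{ab} : 1 ≤ a,b ≤ n] with the bracket defined as the biderivation determined on generators by {x_{ij}, x_{i'j'}} = ½·(sign(i'−i)+sign(j'−j))·x_{ij'}·x_{i'j} + ½·(S_{ii'}−S_{jj'})·x_{ij}·x_{i'j'}, the same formula for the y-variables, and {x_{ab}, y_{cd}} = 0 for all indices. Define z_{ij} = Σ_{a=1}^{n} x_{ia}·y_{aj} (the entries of the matrix product X·Y). Then for all i, j, i', j' ∈ {1,…,n}: {z_{ij}, z_{i'j'}} = ½·(sign(i'−i)+sign(j'−j))·z_{ij'}·z_{i'j} + ½·(S_{ii'}−S_{jj'})·z_{ij}·z_{i'j'}. (This expresses that the Sklyanin bracket associated with R_S is multiplicative, i.e., a Poisson–Lie structure.) -/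
import Mathlib


open MvPolynomial

/-- Variables of the polynomial ring `ℂ[x_{ab}, y_{ab}]`: `Sum.inl (a,b)` is `x_{ab}`
and `Sum.inr (a,b)` is `y_{ab}`. -/
abbrev Vars2 (n : ℕ) := (Fin n × Fin n) ⊕ (Fin n × Fin n)

/-- The Sklyanin bivector coefficient associated with `R_S` on a pair of matrix-entry
variables: `π_{(i,j),(i',j')} = ½(sign(i'−i)+sign(j'−j)) · (entry (i,j')) · (entry (i',j))
+ ½(S_{ii'}−S_{jj'}) · (entry (i,j)) · (entry (i',j'))`, where `emb` embeds an index pair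
into the variable type. -/
noncomputable def sklyaninCoeff {n : ℕ} (S : Matrix (Fin n) (Fin n) ℂ)
    (emb : Fin n × Fin n → Vars2 n) (p q : Fin n × Fin n) : MvPolynomial (Vars2 n) ℂ :=
  C ((1 / 2 : ℂ) *
      ((Int.sign ((q.1 : ℤ) - (p.1 : ℤ)) + Int.sign ((q.2 : ℤ) - (p.2 : ℤ)) : ℤ) : ℂ))
    * X (emb (p.1, q.2)) * X (emb (q.1, p.2))
  + C ((1 / 2 : ℂ) * (S p.1 q.1 - S p.2 q.2)) * X (emb (p.1, p.2)) * X (emb (q.1, q.2))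

/-- The bivector of the product bracket on `ℂ[x, y]`: both factors carry the Sklyanin
bracket associated with `R_S`, and the cross brackets `{x_{ab}, y_{cd}}` vanish. -/
noncomputable def bivec2 {n : ℕ} (S : Matrix (Fin n) (Fin n) ℂ) :
    Vars2 n → Vars2 n → MvPolynomial (Vars2 n) ℂ
  | Sum.inl p, Sum.inl q => sklyaninCoeff S Sum.inl p q
  | Sum.inr p, Sum.inr q => sklyaninCoeff S Sum.inr p q
  | _, _ => 0

/-- The product bracket on `ℂ[x_{ab}, y_{ab}]`, extended from the generators as a
biderivation in each argument. -/
noncomputable def prodBracket2 {n : ℕ} (S : Matrix (Fin n) (Fin n) ℂ)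
    (f g : MvPolynomial (Vars2 n) ℂ) : MvPolynomial (Vars2 n) ℂ :=
  ∑ a : Vars2 n, ∑ b : Vars2 n, bivec2 S a b * pderiv a f * pderiv b g

/-- `z_{ij} = Σ_a x_{ia} y_{aj}`, the entries of the matrix product `X·Y`. -/
noncomputable def zvar {n : ℕ} (i j : Fin n) : MvPolynomial (Vars2 n) ℂ :=
  ∑ a : Fin n, X (Sum.inl (i, a)) * X (Sum.inr (a, j))

lemma pderiv_zvar_inl {n : ℕ} (i j p q : Fin n) :
    pderiv (Sum.inl (p,q) : Vars2 n) (zvar i j)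
      = if p = i then X (Sum.inr (q, j)) else 0 := by
  unfold zvar
  rw [map_sum]
  simp only [Derivation.leibniz, smul_eq_mul, pderiv_X, Pi.single_apply,
    Sum.inl.injEq, Prod.mk.injEq, reduceCtorEq, if_false, mul_zero, add_zero,
    ite_mul, one_mul, zero_mul, zero_add, mul_ite, mul_one, ite_and]
  by_cases h : i = p
  · subst h; simp [Finset.sum_ite_eq]
  · rw [if_neg (fun hh => h hh.symm)]; simp [h]

lemma pderiv_zvar_inr {n : ℕ} (i j p q : Fin n) :
    pderiv (Sum.inr (p,q) : Vars2 n) (zvar i j)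
      = if q = j then X (Sum.inl (i, p)) else 0 := by
  unfold zvar
  rw [map_sum]
  simp only [Derivation.leibniz, smul_eq_mul, pderiv_X, Pi.single_apply,
    Sum.inr.injEq, Prod.mk.injEq, reduceCtorEq, if_false, mul_zero, add_zero,
    ite_mul, one_mul, zero_mul, zero_add, mul_ite, mul_one, ite_and]
  by_cases h : j = q
  · subst h; simp [Finset.sum_ite_eq]
  · rw [if_neg (fun hh => h hh.symm)]; simp [h]

lemma collapse1 {M : Type*} [AddCommMonoid M] {n : ℕ} (i i' : Fin n)
    (f : Fin n → Fin n → Fin n → Fin n → M) :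
    (∑ x : Fin n, ∑ x1 : Fin n, ∑ x2 : Fin n, ∑ x3 : Fin n,
      if x2 = i' then if x = i then f x x1 x2 x3 else 0 else 0)
    = ∑ x1 : Fin n, ∑ x3 : Fin n, f i x1 i' x3 := by
  have h1 : ∀ (x x1 x2 : Fin n),
      (∑ x3 : Fin n, if x2 = i' then if x = i then f x x1 x2 x3 else 0 else 0)
      = if x2 = i' then if x = i then ∑ x3 : Fin n, f x x1 x2 x3 else 0 else 0 := by
    intros; split_ifs <;> simp
  simp only [h1, Finset.sum_ite_eq', Finset.mem_univ, if_true]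
  rw [Finset.sum_comm]
  simp [Finset.sum_ite_eq']

lemma collapse2 {M : Type*} [AddCommMonoid M] {n : ℕ} (j j' : Fin n)
    (f : Fin n → Fin n → Fin n → Fin n → M) :
    (∑ x : Fin n, ∑ x1 : Fin n, ∑ x2 : Fin n, ∑ x3 : Fin n,
      if x3 = j' then if x1 = j then f x x1 x2 x3 else 0 else 0)
    = ∑ x : Fin n, ∑ x2 : Fin n, f x j x2 j' := by
  have h1 : ∀ (x x1 x2 : Fin n),
      (∑ x3 : Fin n, if x3 = j' then if x1 = j then f x x1 x2 x3 else 0 else 0)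
      = if x1 = j then f x x1 x2 j' else 0 := by
    intros; rw [Finset.sum_ite_eq']; simp
  simp only [h1]
  have h2 : ∀ (x x1 : Fin n),
      (∑ x2 : Fin n, if x1 = j then f x x1 x2 j' else 0)
      = if x1 = j then ∑ x2 : Fin n, f x x1 x2 j' else 0 := by
    intros; split_ifs <;> simp
  simp only [h2, Finset.sum_ite_eq', Finset.mem_univ, if_true]

lemma key {n : ℕ} (S : Matrix (Fin n) (Fin n) ℂ) (i j i' j' : Fin n) :
    prodBracket2 S (zvar i j) (zvar i' j')
      = ∑ a : Fin n, ∑ b : Fin n,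
          (sklyaninCoeff S Sum.inl (i,a) (i',b) * X (Sum.inr (a,j)) * X (Sum.inr (b,j'))
           + sklyaninCoeff S Sum.inr (a,j) (b,j') * X (Sum.inl (i,a)) * X (Sum.inl (i',b))) := by
  unfold prodBracket2
  rw [Fintype.sum_sum_type]
  simp only [Fintype.sum_sum_type, Fintype.sum_prod_type, bivec2,
    pderiv_zvar_inl, pderiv_zvar_inr, mul_ite, ite_mul, mul_zero, zero_mul,
    Finset.sum_const_zero, add_zero, zero_add]
  rw [collapse1 i i' (fun x x1 x2 x3 =>
        sklyaninCoeff S Sum.inl (x, x1) (x2, x3) * X (Sum.inr (x1, j)) * X (Sum.inr (x3, j'))),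
      collapse2 j j' (fun x x1 x2 x3 =>
        sklyaninCoeff S Sum.inr (x, x1) (x2, x3) * X (Sum.inl (i, x)) * X (Sum.inl (i', x2)))]
  rw [← Finset.sum_add_distrib]
  refine Finset.sum_congr rfl fun a _ => ?_
  rw [← Finset.sum_add_distrib]

noncomputable def gterm {n : ℕ} (S : Matrix (Fin n) (Fin n) ℂ) (i j i' j' a b : Fin n) :
    MvPolynomial (Vars2 n) ℂ :=
  C ((1/2:ℂ) * ((Int.sign ((i':ℤ) - (i:ℤ)) : ℤ) : ℂ)) *
      (X (Sum.inl (i,b)) * X (Sum.inr (b,j')) * (X (Sum.inl (i',a)) * X (Sum.inr (a,j))))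
  + C ((1/2:ℂ) * ((Int.sign ((j':ℤ) - (j:ℤ)) : ℤ) : ℂ)) *
      (X (Sum.inl (i,a)) * X (Sum.inr (a,j')) * (X (Sum.inl (i',b)) * X (Sum.inr (b,j))))
  + C ((1/2:ℂ) * (S i i' - S j j')) *
      (X (Sum.inl (i,a)) * X (Sum.inr (a,j)) * (X (Sum.inl (i',b)) * X (Sum.inr (b,j'))))

noncomputable def hterm {n : ℕ} (i j i' j' a b : Fin n) : MvPolynomial (Vars2 n) ℂ :=
  C ((1/2:ℂ) * ((Int.sign ((b:ℤ) - (a:ℤ)) : ℤ) : ℂ)) *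
    (X (Sum.inl (i,b)) * X (Sum.inl (i',a)) * X (Sum.inr (a,j)) * X (Sum.inr (b,j'))
     + X (Sum.inl (i,a)) * X (Sum.inl (i',b)) * X (Sum.inr (a,j')) * X (Sum.inr (b,j)))

lemma point {n : ℕ} (S : Matrix (Fin n) (Fin n) ℂ) (i j i' j' a b : Fin n) :
    sklyaninCoeff S Sum.inl (i,a) (i',b) * X (Sum.inr (a,j)) * X (Sum.inr (b,j'))
    + sklyaninCoeff S Sum.inr (a,j) (b,j') * X (Sum.inl (i,a)) * X (Sum.inl (i',b))
    = gterm S i j i' j' a b + hterm i j i' j' a b := by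
  simp only [sklyaninCoeff, gterm, hterm]
  push_cast
  simp only [mul_add, mul_sub, map_add, map_sub]
  ring

lemma hterm_antisymm {n : ℕ} (i j i' j' a b : Fin n) :
    hterm (n := n) i j i' j' b a = - hterm i j i' j' a b := by
  simp only [hterm]
  have : ((a:ℤ) - (b:ℤ)) = -((b:ℤ) - (a:ℤ)) := by ring
  rw [this, Int.sign_neg]
  push_cast
  simp only [mul_neg, map_neg]
  ring

/-- The Sklyanin bracket associated with `R_S` is multiplicative (a Poisson–Lie
structure): the entries `z_{ij}` of the product `X·Y` satisfy the same Sklyanin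
relations. -/
theorem sklyanin_multiplicative (n : ℕ) (hn : 1 ≤ n)
    (S : Matrix (Fin n) (Fin n) ℂ) (hS : Matrix.transpose S = -S)
    (i j i' j' : Fin n) :
    prodBracket2 S (zvar i j) (zvar i' j')
      = C ((1 / 2 : ℂ) *
            ((Int.sign ((i' : ℤ) - (i : ℤ)) + Int.sign ((j' : ℤ) - (j : ℤ)) : ℤ) : ℂ))
          * zvar i j' * zvar i' j
        + C ((1 / 2 : ℂ) * (S i i' - S j j')) * zvar i j * zvar i' j' := by
  rw [key]
  have hZ : (∑ a : Fin n, ∑ b : Fin n, hterm i j i' j' a b) = 0 := by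
    have h2 : (∑ a : Fin n, ∑ b : Fin n, hterm i j i' j' a b)
        + (∑ a : Fin n, ∑ b : Fin n, hterm i j i' j' a b) = 0 := by
      nth_rewrite 2 [Finset.sum_comm]
      rw [← Finset.sum_add_distrib]
      refine Finset.sum_eq_zero fun a _ => ?_
      rw [← Finset.sum_add_distrib]
      refine Finset.sum_eq_zero fun b _ => ?_
      rw [hterm_antisymm i j i' j' a b]
      ring
    exact add_self_eq_zero.mp h2
  have c12 : (C ((1 / 2 : ℂ) *
        ((Int.sign ((i' : ℤ) - (i : ℤ)) + Int.sign ((j' : ℤ) - (j : ℤ)) : ℤ) : ℂ))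
          : MvPolynomial (Vars2 n) ℂ)
      = C ((1/2:ℂ) * ((Int.sign ((i':ℤ) - (i:ℤ)) : ℤ) : ℂ))
        + C ((1/2:ℂ) * ((Int.sign ((j':ℤ) - (j:ℤ)) : ℤ) : ℂ)) := by
    push_cast
    rw [mul_add, map_add]
  have f1 : zvar (n := n) i j' * zvar i' j
      = ∑ a : Fin n, ∑ b : Fin n,
          (X (Sum.inl (i,a)) * X (Sum.inr (a,j'))) * (X (Sum.inl (i',b)) * X (Sum.inr (b,j))) :=
    Finset.sum_mul_sum _ _ _ _
  have f1' : zvar (n := n) i j' * zvar i' j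
      = ∑ a : Fin n, ∑ b : Fin n,
          (X (Sum.inl (i,b)) * X (Sum.inr (b,j'))) * (X (Sum.inl (i',a)) * X (Sum.inr (a,j))) :=
    f1.trans Finset.sum_comm
  have f2 : zvar (n := n) i j * zvar i' j'
      = ∑ a : Fin n, ∑ b : Fin n,
          (X (Sum.inl (i,a)) * X (Sum.inr (a,j))) * (X (Sum.inl (i',b)) * X (Sum.inr (b,j'))) :=
    Finset.sum_mul_sum _ _ _ _
  calc (∑ a : Fin n, ∑ b : Fin n,
          (sklyaninCoeff S Sum.inl (i,a) (i',b) * X (Sum.inr (a,j)) * X (Sum.inr (b,j'))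
           + sklyaninCoeff S Sum.inr (a,j) (b,j') * X (Sum.inl (i,a)) * X (Sum.inl (i',b))))
      = (∑ a : Fin n, ∑ b : Fin n, gterm S i j i' j' a b)
        + ∑ a : Fin n, ∑ b : Fin n, hterm i j i' j' a b := by
        simp only [point S i j i' j']
        simp only [Finset.sum_add_distrib]
    _ = ∑ a : Fin n, ∑ b : Fin n, gterm S i j i' j' a b := by rw [hZ, add_zero]
    _ = _ := by
        rw [c12, add_mul, add_mul, mul_assoc, mul_assoc, mul_assoc]
        nth_rewrite 1 [f1']
        rw [f1, f2]
        simp only [Finset.mul_sum]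
        rw [← Finset.sum_add_distrib, ← Finset.sum_add_distrib]
        refine Finset.sum_congr rfl fun a _ => ?_
        rw [← Finset.sum_add_distrib, ← Finset.sum_add_distrib]
        refine Finset.sum_congr rfl fun b _ => ?_
        simp only [gterm]
        try ring
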